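/- If (S,T) is a unit-stabilized pair with S a finite commutative unital semigroup and T an ideal of S, then D(S) = max(D(U(S)), D(S,T)). -/

import Mathlib

/-- A list (sequence) in a commutative monoid is reducible if a proper
subsequence has the same product. -/
def Reducible {M : Type*} [CommMonoid M] (A : List M) : Prop :=
  ∃ B : List M, List.Sublist B A ∧ B.length < A.length ∧ B.prod = A.prod

/-- The Davenport constant: the least positive `n` such that every sequence of
length `n` is reducible (`⊤` if none exists). -/
noncomputable def davenport (M : Type*) [CommMonoid M] : ℕ∞ :=
  sInf {k : ℕ∞ | ∃ n : ℕ, k = n ∧ 0 < n ∧ ∀ A : List M, A.length = n → Reducible A}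

/-- An ideal of a commutative monoid. -/
def IsMulIdeal {M : Type*} [CommMonoid M] (T : Set M) : Prop :=
  ∀ s t : M, t ∈ T → s * t ∈ T

/-- The relative Davenport constant `D(S, T)`: the least positive `n` such
that every sequence of length `n` with product in `T` is reducible. -/
noncomputable def davenportRel (M : Type*) [CommMonoid M] (T : Set M) : ℕ∞ :=
  sInf {k : ℕ∞ | ∃ n : ℕ, k = n ∧ 0 < n ∧
    ∀ A : List M, A.length = n → A.prod ∈ T → Reducible A}

/-- `(S, T)` is a unit-stabilized pair. -/
def UnitStabilizedPair (M : Type*) [CommMonoid M] (T : Set M) : Prop :=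
  ∀ a b : M, a * b ∉ T →
    {u : Mˣ | (u : M) * a = a} = {u : Mˣ | (u : M) * (a * b) = a * b} →
    ∃ u : Mˣ, a * b = a * u

/-!
Sequences with product in `T` are handled by `D(S, T)`. For a sequence `a₁ ⋯ aₙ` with product
outside the ideal `T`, every partial product `xᵢ = a₁ ⋯ aᵢ` lies outside `T`, and the unit
stabilizers of the `xᵢ` increase. At each step either the stabilizer grows, and we record a unit
`vᵢ ∈ Stab(xᵢ) \ Stab(xᵢ₋₁)`, or it stays the same, and unit-stabilization gives a unit `uᵢ`
with `xᵢ = xᵢ₋₁ uᵢ`. If `n ≥ D(U(S))`, the recorded units have a nonempty subsequence with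
product one. It cannot consist of `v`'s alone (look at the largest index), so it contains `u`'s,
and their product lies in `Stab(xₙ)`; deleting the corresponding `aᵢ` does not change the product.
-/

open MulAction
open scoped List

lemma List.Sublist.exists_sublist_perm_append {α : Type*} {B W : List α} (h : B <+ W) :
    ∃ C, C <+ W ∧ W ~ B ++ C := by
  induction h with
  | slnil => exact ⟨[], .slnil, .nil⟩
  | cons a _ ih =>
    obtain ⟨C, hC, hp⟩ := ih
    exact ⟨a :: C, hC.cons_cons a, (hp.cons a).trans List.perm_middle.symm⟩
  | cons_cons a _ ih =>
    obtain ⟨C, hC, hp⟩ := ih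
    exact ⟨C, hC.cons a, hp.cons a⟩

section Reducible

variable {M : Type*} [CommMonoid M]

lemma Reducible.of_map {N : Type*} [CommMonoid N] {f : M →* N} (hf : Function.Injective f)
    {A : List M} (h : Reducible (A.map f)) : Reducible A := by
  obtain ⟨B, hB, hlen, hprod⟩ := h
  obtain ⟨B₀, hB₀, rfl⟩ := List.sublist_map_iff.mp hB
  exact ⟨B₀, hB₀, by simpa using hlen, hf (by simpa only [map_list_prod] using hprod)⟩

lemma reducible_of_length_ge {p : M → Prop} {n : ℕ} (hn : 0 < n)
    (h : ∀ A : List M, A.length = n → p A.prod → Reducible A) {A : List M}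
    (hA : n ≤ A.length) (hp : p A.prod) : Reducible A := by
  suffices ∀ k, n ≤ k → ∀ A : List M, A.length = k → p A.prod → Reducible A from
    this _ hA A rfl hp
  intro k hk
  induction k, hk using Nat.le_induction with
  | base => exact h
  | succ k hk ih =>
    intro A hlen hp
    obtain _ | ⟨a, _ | ⟨b, R⟩⟩ := A
    · simp at hlen
    · simp only [List.length_singleton] at hlen
      omega
    obtain ⟨B, hB, hBlen, hBprod⟩ := ih (a * b :: R) (by simpa using hlen)
      (by simpa [mul_assoc] using hp)
    rcases List.sublist_cons_iff.mp hB with hBR | ⟨B', rfl, hB'⟩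
    · exact ⟨B, (hBR.cons b).cons a,
        by simpa using Nat.lt_add_right 1 (Nat.lt_succ_of_le hBR.length_le),
        by simpa [mul_assoc] using hBprod⟩
    · exact ⟨a :: b :: B', (hB'.cons_cons b).cons_cons a, by simpa using hBlen,
        by simpa [mul_assoc] using hBprod⟩

lemma Reducible.exists_sublist_prod_eq_one {G : Type*} [CommGroup G] {W : List G}
    (h : Reducible W) : ∃ W', W' <+ W ∧ W' ≠ [] ∧ W'.prod = 1 := by
  obtain ⟨B, hB, hlen, hprod⟩ := h
  obtain ⟨C, hC, hp⟩ := hB.exists_sublist_perm_append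
  refine ⟨C, hC, ?_, ?_⟩
  · rintro rfl
    simp [hp.length_eq] at hlen
  · simpa [hp.prod_eq, List.prod_append] using hprod.symm

end Reducible

lemma sInf_le_max_sInf {α : Type*} [CompleteLinearOrder α] [WellFoundedLT α] {A B C : Set α}
    (h : ∀ a ∈ A, ∀ b ∈ B, max a b ∈ C) : sInf C ≤ max (sInf A) (sInf B) := by
  rcases A.eq_empty_or_nonempty with rfl | hA
  · simp
  rcases B.eq_empty_or_nonempty with rfl | hB
  · simp
  exact sInf_le (h _ (csInf_mem hA) _ (csInf_mem hB))

section Stabilizer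

variable {S : Type*} [CommMonoid S]

lemma stabilizer_le_stabilizer_mul (x y : S) : stabilizer Sˣ x ≤ stabilizer Sˣ (x * y) :=
  fun u hu => by rw [mem_stabilizer_iff, ← smul_mul_assoc, mem_stabilizer_iff.mp hu]

lemma stabilizer_mul_units (x : S) (u : Sˣ) : stabilizer Sˣ (x * u) = stabilizer Sˣ x := by
  ext v
  simp only [mem_stabilizer_iff, ← smul_mul_assoc, Units.mul_left_inj]

variable {T : Set S}

lemma UnitStabilizedPair.exists_unit_or_stabilizer_lt (hus : UnitStabilizedPair S T) {x a : S}
    (h : x * a ∉ T) :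
    (∃ u : Sˣ, x * a = x * u) ∨ stabilizer Sˣ x < stabilizer Sˣ (x * a) := by
  rcases (stabilizer_le_stabilizer_mul x a).lt_or_eq with hlt | heq
  · exact .inr hlt
  · exact .inl (hus x a h (congrArg SetLike.coe heq))

/-- Here `x` is the product of the terms already read and `W` records the units `uᵢ`, `vᵢ`.
A subsequence `W'` of `W` lying in the coset `c • Stab(x)` allows deleting the terms of `A`
behind the `uᵢ` in `W'`, at the cost of the factor `c`. -/
lemma UnitStabilizedPair.exists_units_list (hT : IsMulIdeal T) (hus : UnitStabilizedPair S T)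
    (A : List S) (x : S) (hA : x * A.prod ∉ T) :
    ∃ W : List Sˣ, W.length = A.length ∧
      ∀ W', W' <+ W → ∀ c : Sˣ, c⁻¹ * W'.prod ∈ stabilizer Sˣ x →
        ∃ A', A' <+ A ∧ x * c * A'.prod = x * A.prod ∧
          (c ∈ stabilizer Sˣ x → W' ≠ [] → A'.length < A.length) := by
  induction A generalizing x with
  | nil =>
    refine ⟨[], rfl, fun W' hW' c hc => ?_⟩
    obtain rfl := List.sublist_nil.mp hW'
    refine ⟨[], .slnil, ?_, fun _ hne => absurd rfl hne⟩
    have : c ∈ stabilizer Sˣ x := by simpa using hc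
    simpa [mul_comm x, Units.smul_def] using mem_stabilizer_iff.mp this
  | cons a A ih =>
    rw [List.prod_cons] at hA
    have hxa : x * a ∉ T := fun hxa => hA (by rw [← mul_assoc, mul_comm]; exact hT _ _ hxa)
    obtain ⟨W₀, hlen, hW₀⟩ := ih (x * a) (by rwa [mul_assoc])
    have keep : ∀ W', W' <+ W₀ → ∀ c : Sˣ, c⁻¹ * W'.prod ∈ stabilizer Sˣ (x * a) →
        ∃ A', A' <+ a :: A ∧ x * c * A'.prod = x * (a :: A).prod ∧
          (c ∈ stabilizer Sˣ x → W' ≠ [] → A'.length < (a :: A).length) := by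
      intro W' hW' c hc
      obtain ⟨A', hA', heq, hlt⟩ := hW₀ W' hW' c hc
      refine ⟨a :: A', hA'.cons_cons a, ?_,
        fun hcx hne => by simpa using hlt (stabilizer_le_stabilizer_mul x a hcx) hne⟩
      simp only [List.prod_cons]
      calc x * c * (a * A'.prod) = x * a * c * A'.prod := by ac_rfl
        _ = x * (a * A.prod) := by rw [heq, mul_assoc]
    rcases hus.exists_unit_or_stabilizer_lt hxa with ⟨u, hu⟩ | hlt
    · have hstab : stabilizer Sˣ (x * a) = stabilizer Sˣ x := by rw [hu, stabilizer_mul_units]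
      refine ⟨u :: W₀, by simp [hlen], fun W' hW' c hc => ?_⟩
      rcases List.sublist_cons_iff.mp hW' with hW' | ⟨W'', rfl, hW''⟩
      · exact keep W' hW' c (hstab ▸ hc)
      · obtain ⟨A', hA', heq, -⟩ :=
          hW₀ W'' hW'' (u⁻¹ * c) (by rw [hstab]; simpa [mul_assoc] using hc)
        refine ⟨A', hA'.cons a, ?_, fun _ _ => by simpa using Nat.lt_succ_of_le hA'.length_le⟩
        calc x * c * A'.prod = x * u * ↑(u⁻¹ * c) * A'.prod := by
              simp [mul_assoc]
          _ = x * (a :: A).prod := by rw [← hu, heq, List.prod_cons, mul_assoc]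
    · obtain ⟨v, hv, hvx⟩ := SetLike.exists_of_lt hlt
      refine ⟨v :: W₀, by simp [hlen], fun W' hW' c hc => ?_⟩
      rcases List.sublist_cons_iff.mp hW' with hW' | ⟨W'', rfl, hW''⟩
      · exact keep W' hW' c (hlt.le hc)
      · have hc' : c⁻¹ * W''.prod ∈ stabilizer Sˣ (x * a) := by
          simpa [mul_left_comm] using mul_mem (hlt.le hc) (inv_mem hv)
        obtain ⟨A', hA', heq, hlt'⟩ := keep W'' hW'' c hc'
        refine ⟨A', hA', heq, fun hcx _ => hlt' hcx ?_⟩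
        rintro rfl
        exact hvx (by simpa using mul_mem hcx hc)

lemma UnitStabilizedPair.reducible_of_prod_notMem (hT : IsMulIdeal T)
    (hus : UnitStabilizedPair S T) {A : List S} (hA : A.prod ∉ T)
    (hunits : ∀ W : List Sˣ, W.length = A.length → Reducible W) : Reducible A := by
  obtain ⟨W, hlen, hW⟩ := hus.exists_units_list hT A 1 (by rwa [one_mul])
  obtain ⟨W', hW', hne, hone⟩ := (hunits W hlen).exists_sublist_prod_eq_one
  obtain ⟨A', hA', heq, hlt⟩ := hW W' hW' 1 (by simp [hone])
  exact ⟨A', hA', hlt (one_mem _) hne, by simpa using heq⟩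

end Stabilizer

theorem davenport_eq_max_of_unit_stabilized_general {S : Type*} [CommMonoid S]
    (T : Set S) (hT : IsMulIdeal T) (hus : UnitStabilizedPair S T) :
    davenport S = max (davenport Sˣ) (davenportRel S T) := by
  refine le_antisymm (sInf_le_max_sInf ?_) (max_le (sInf_le_sInf ?_) (sInf_le_sInf ?_))
  · rintro _ ⟨n₁, rfl, hn₁, hU⟩ _ ⟨n₂, rfl, hn₂, hST⟩
    refine ⟨max n₁ n₂, by norm_cast, by omega, fun A hA => ?_⟩
    by_cases hAT : A.prod ∈ T
    · exact reducible_of_length_ge hn₂ hST (by omega) hAT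
    · refine hus.reducible_of_prod_notMem hT hAT fun W hW => ?_
      exact reducible_of_length_ge (p := fun _ => True) hn₁ (fun W hW _ => hU W hW) (by omega)
        trivial
  · rintro _ ⟨n, rfl, hn, hS⟩
    exact ⟨n, rfl, hn, fun W hW =>
      (hS _ (by simpa)).of_map (f := Units.coeHom S) fun _ _ => Units.ext⟩
  · rintro _ ⟨n, rfl, hn, hS⟩
    exact ⟨n, rfl, hn, fun A hA _ => hS A hA⟩

theorem davenport_eq_max_of_unit_stabilized {S : Type*} [CommMonoid S] [Finite S]
    (T : Set S) (hT : IsMulIdeal T) (hus : UnitStabilizedPair S T) :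
    davenport S = max (davenport Sˣ) (davenportRel S T) :=
  davenport_eq_max_of_unit_stabilized_general T hT hus
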